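/- arXiv:quant-ph/0211124 — 3 statements merged into one kernel-verified Lean document; each statement's English description precedes it below -/
import Mathlib

section
/- Let p be prime and b ∈ {0,...,p-1}. Then there exists ℓ ∈ {0,...,p-2} such that |b/p − ℓ/(p-1)| ≤ 1/(2(p-1)), and for this ℓ, the quantity P(ℓ) = (1/(p-1)²)·|∑_{j=1}^{p-1} e^{2πi(b/p − ℓ/(p-1))j}|² satisfies P(ℓ) ≥ 4/π². -/
/-! Take `ℓ` nearest to `b (p - 1) / p`, so that `δ = b / p - ℓ / (p - 1)` has `|δ| ≤ 1 / (2n)`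
with `n = p - 1`. The sum is geometric, of modulus `|sin (π δ n)| / |sin (π δ)|`. As
`|π δ n| ≤ π / 2`, Jordan's inequality bounds the numerator below by `2 |δ| n`, while
`|sin t| ≤ |t|` bounds the denominator above by `π |δ|`; hence the modulus is at least `2n / π`. -/

open Real Complex Finset

/- Rounds half-integers down: `round` would send `x = m + 1 / 2` to `m + 1`. -/
lemma exists_nat_le_abs_sub_le_half {x : ℝ} {m : ℕ} (hx₀ : 0 ≤ x) (hxm : x ≤ m + 1 / 2) :
    ∃ ℓ : ℕ, ℓ ≤ m ∧ |x - ℓ| ≤ 1 / 2 := by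
  refine ⟨⌈x - 1 / 2⌉₊, Nat.ceil_le.mpr (by linarith), abs_le.mpr ⟨?_, ?_⟩⟩
  · rcases le_total (x - 1 / 2) 0 with h | h
    · rw [Nat.ceil_eq_zero.mpr h]; push_cast; linarith
    · linarith [Nat.ceil_lt_add_one h]
  · linarith [Nat.le_ceil (x - 1 / 2)]

lemma norm_sum_Icc_exp_eq_abs_sin_div (n : ℕ) {x : ℝ} (hx : Real.sin (π * x) ≠ 0) :
    ‖∑ j ∈ Icc 1 n, exp (2 * π * I * x * j)‖ =
      |Real.sin (π * x * n)| / |Real.sin (π * x)| := by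
  set z := exp (I * ↑(2 * π * x))
  have hpow (k : ℕ) : z ^ k = exp (I * ↑(2 * π * x * k)) := by
    rw [← Complex.exp_nat_mul]; push_cast; ring_nf
  have hsub (k : ℕ) : ‖z ^ k - 1‖ = 2 * |Real.sin (π * x * k)| := by
    rw [hpow, norm_exp_I_mul_ofReal_sub_one, norm_mul, Real.norm_eq_abs, Real.norm_eq_abs]
    ring_nf
  have hz : z ≠ 1 := fun h ↦ hx <| by simpa [h] using hsub 1
  have hsum : ∑ j ∈ Icc 1 n, exp (2 * π * I * x * j) = z * ((z ^ n - 1) / (z - 1)) := by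
    rw [← geom_sum_eq hz, mul_sum, ← Ico_add_one_right_eq_Icc, sum_Ico_eq_sum_range]
    refine sum_congr (by simp) fun j _ ↦ ?_
    rw [← pow_succ', hpow]; push_cast; ring_nf
  rw [hsum, norm_mul, norm_exp_I_mul_ofReal, one_mul, norm_div, hsub, ← pow_one z, hsub]
  simp only [Nat.cast_one, mul_one]
  rw [mul_div_mul_left _ _ two_ne_zero]

lemma two_mul_div_pi_le_norm_sum_Icc_exp {n : ℕ} {x : ℝ} (hx : |x| ≤ 1 / (2 * n)) :
    2 * n / π ≤ ‖∑ j ∈ Icc 1 n, exp (2 * π * I * x * j)‖ := by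
  rcases eq_or_ne x 0 with rfl | hx₀
  · simp only [ofReal_zero, mul_zero, zero_mul, Complex.exp_zero, sum_const, Nat.card_Icc,
      add_tsub_cancel_right, nsmul_eq_mul, mul_one, Complex.norm_natCast]
    rw [div_le_iff₀ pi_pos]
    nlinarith [pi_gt_three, (n.cast_nonneg : (0 : ℝ) ≤ n)]
  have hn : (1 : ℝ) ≤ n := by
    rcases Nat.eq_zero_or_pos n with rfl | h
    · simp [hx₀] at hx
    · exact Nat.one_le_cast.mpr h
  have hxn : π * |x| * n ≤ π / 2 := by
    calc π * |x| * n ≤ π * (1 / (2 * n)) * n := by gcongr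
      _ = π / 2 := by field_simp
  have hsin_lo (t : ℝ) (ht : t ≤ n) (ht₀ : 0 ≤ t) : 2 * |x| * t ≤ |Real.sin (π * x * t)| := by
    have h := mul_abs_le_abs_sin (x := π * x * t) <| by
      rw [abs_mul, abs_mul, abs_of_pos pi_pos, abs_of_nonneg ht₀]
      exact le_trans (by gcongr) hxn
    rw [abs_mul, abs_mul, abs_of_pos pi_pos, abs_of_nonneg ht₀] at h
    convert h using 1; field_simp
  have hsin_hi : |Real.sin (π * x)| ≤ π * |x| := by
    simpa [abs_mul, abs_of_pos pi_pos] using abs_sin_le_abs (x := π * x)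
  have hsin_pos : 0 < |Real.sin (π * x)| := by
    have := hsin_lo 1 hn zero_le_one
    simp only [mul_one] at this
    linarith [abs_pos.mpr hx₀]
  rw [norm_sum_Icc_exp_eq_abs_sin_div n (abs_pos.mp hsin_pos), le_div_iff₀ hsin_pos]
  calc 2 * n / π * |Real.sin (π * x)| ≤ 2 * n / π * (π * |x|) := by gcongr
    _ = 2 * |x| * n := by field_simp
    _ ≤ |Real.sin (π * x * n)| := hsin_lo n le_rfl n.cast_nonneg

/-- For any prime `p` and `b ∈ {0, …, p-1}`, there is a frequency `ℓ ∈ {0, …, p-2}` with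
`|b/p - ℓ/(p-1)| ≤ 1/(2(p-1))`, and for this `ℓ` the sampling probability
`P(ℓ) = (1/(p-1)²)·|∑_{j=1}^{p-1} e^{2πi(b/p - ℓ/(p-1))j}|²` is at least `4/π² = (2/π)²`. -/
theorem stmt_2 (p : ℕ) (hp : p.Prime) (b : ℕ) (hb : b ≤ p - 1) :
    ∃ ℓ : ℕ, ℓ ≤ p - 2 ∧
      |(b : ℝ) / p - (ℓ : ℝ) / ((p : ℝ) - 1)| ≤ 1 / (2 * ((p : ℝ) - 1)) ∧
      4 / Real.pi ^ 2 ≤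
        1 / ((p : ℝ) - 1) ^ 2 * ‖(∑ j ∈ Finset.Icc 1 (p - 1),
          Complex.exp (2 * Real.pi * Complex.I *
            (((b : ℝ) / p - (ℓ : ℝ) / ((p : ℝ) - 1) : ℝ) : ℂ) * (j : ℂ)))‖ ^ 2 := by
  have hp₂ := hp.two_le
  have hN : ((p - 1 : ℕ) : ℝ) = p - 1 := by rw [Nat.cast_sub (by omega), Nat.cast_one]
  have hM : ((p - 2 : ℕ) : ℝ) = p - 2 := by rw [Nat.cast_sub hp₂, Nat.cast_two]
  have hN₀ : (0 : ℝ) < p - 1 := by rw [← hN]; exact_mod_cast (by omega : 0 < p - 1)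
  have hb' : (b : ℝ) ≤ p - 1 := by rw [← hN]; exact_mod_cast hb
  obtain ⟨ℓ, hℓ, hround⟩ := exists_nat_le_abs_sub_le_half (x := b * (p - 1) / p) (m := p - 2)
    (by have := b.cast_nonneg (α := ℝ); positivity) <| by
      rw [hM, div_le_iff₀ (by linarith)]
      nlinarith
  have hclose : |(b : ℝ) / p - ℓ / (p - 1)| ≤ 1 / (2 * (p - 1)) := by
    have h : (b : ℝ) / p - ℓ / (p - 1) = (b * (p - 1) / p - ℓ) / (p - 1) := by
      field_simp
    calc _ = |(b : ℝ) * (p - 1) / p - ℓ| / (p - 1) := by rw [h, abs_div, abs_of_pos hN₀]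
      _ ≤ 1 / 2 / ((p : ℝ) - 1) := by gcongr
      _ = _ := by rw [div_div]
  refine ⟨ℓ, hℓ, hclose, ?_⟩
  have hsum := two_mul_div_pi_le_norm_sum_Icc_exp (n := p - 1) (hN ▸ hclose)
  rw [hN] at hsum
  calc 4 / π ^ 2 = 1 / ((p : ℝ) - 1) ^ 2 * (2 * (p - 1) / π) ^ 2 := by
        field_simp; ring
    _ ≤ _ := by gcongr
end

section
/- Let p be prime, q | p−1, and G = ℤ_q ⋉ ℤ_p (nontrivial action, q > 1). If A is a nontrivial normal subgroup of G and A ⊆ B ≤ G, then B is normal in G. -/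
/-- The multiplication action of `(ℤ/pℤ)ˣ` on `ℤ/pℤ`. -/
def phi (p : ℕ) : (ZMod p)ˣ →* MulAut (Multiplicative (ZMod p)) where
  toFun a :=
    { toFun := fun x => Multiplicative.ofAdd ((a : ZMod p) * x.toAdd)
      invFun := fun x => Multiplicative.ofAdd (((a⁻¹ : (ZMod p)ˣ) : ZMod p) * x.toAdd)
      left_inv := by intro x; simp [← mul_assoc, ← Units.val_mul]
      right_inv := by intro x; simp [← mul_assoc, ← Units.val_mul]
      map_mul' := by intro x y; simp [mul_add] }
  map_one' := by ext x; simp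
  map_mul' := by intro a b; ext x; simp [mul_assoc]

/-- The `q`-hedral group `ℤ_q ⋉ ℤ_p`, realized with `ℤ_q = ⟨a⟩ ≤ (ℤ/pℤ)ˣ` for `a` of
multiplicative order `q`, acting on `ℤ_p` by multiplication. -/
abbrev Gq (p : ℕ) (a : (ZMod p)ˣ) :=
  Multiplicative (ZMod p) ⋊[(phi p).comp (Subgroup.zpowers a).subtype] ↥(Subgroup.zpowers a)

/-- In `G = ℤ_q ⋉ ℤ_p` (nontrivial action, `q > 1`, `p` prime, `q ∣ p-1`): if `A` is a
nontrivial normal subgroup of `G` and `A ⊆ B ≤ G`, then `B` is normal in `G`. -/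
theorem stmt_12 (p q : ℕ) (hp : Fact p.Prime) (hq : q ∣ p - 1) (hq1 : 1 < q)
    (a : (ZMod p)ˣ) (ha : orderOf a = q)
    (A B : Subgroup (Gq p a)) (hA : A.Normal) (hAbot : A ≠ ⊥) (hAB : A ≤ B) :
    B.Normal := by
  classical
  -- conjugation of an `inl` element by anything
  have key : ∀ (x : Gq p a) (n : Multiplicative (ZMod p)),
      x * SemidirectProduct.inl n * x⁻¹ =
        SemidirectProduct.inl (((phi p).comp (Subgroup.zpowers a).subtype) x.right n) := by
    intro x n
    ext
    · simp [SemidirectProduct.mul_left, SemidirectProduct.inv_left, map_inv, mul_comm,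
        mul_left_comm]
    · simp [SemidirectProduct.mul_right, SemidirectProduct.inv_right]
  have hphi : ∀ h : ↥(Subgroup.zpowers a),
      ((phi p).comp (Subgroup.zpowers a).subtype) h (Multiplicative.ofAdd 1)
        = Multiplicative.ofAdd ((h : (ZMod p)ˣ) : ZMod p) := by
    intro h
    show Multiplicative.ofAdd (((h : (ZMod p)ˣ) : ZMod p) * 1) = _
    rw [mul_one]
  -- Step 1: find a nontrivial element of A in the ℤ_p part
  have hstep1 : ∃ z : ZMod p, z ≠ 0 ∧ SemidirectProduct.inl (Multiplicative.ofAdd z) ∈ A := by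
    obtain ⟨g, hgA, hg1⟩ := A.bot_or_exists_ne_one.resolve_left hAbot
    by_cases hR : g.right = 1
    · refine ⟨Multiplicative.toAdd g.left, ?_, ?_⟩
      · intro h0
        apply hg1
        have hL : g.left = 1 := by
          have := congrArg Multiplicative.ofAdd h0
          simpa using this
        ext <;> simp [hL, hR]
      · have : SemidirectProduct.inl (Multiplicative.ofAdd (Multiplicative.toAdd g.left))
            = g := by ext <;> simp [hR]
        rwa [this]
    · set m : Gq p a := SemidirectProduct.inl (Multiplicative.ofAdd (1 : ZMod p)) with hm
      have hcA : (g * m * g⁻¹) * m⁻¹ ∈ A := by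
        have h1 : g * m * g⁻¹ * m⁻¹ = g * (m * g⁻¹ * m⁻¹) := by group
        rw [h1]
        exact A.mul_mem hgA (by simpa [mul_assoc] using hA.conj_mem _ (A.inv_mem hgA) m)
      have hval : (g * m * g⁻¹) * m⁻¹
          = SemidirectProduct.inl
              (Multiplicative.ofAdd (((g.right : (ZMod p)ˣ) : ZMod p) - 1)) := by
        rw [hm, key, hphi, ← map_inv, ← map_mul]
        congr 1
        show Multiplicative.ofAdd _ * Multiplicative.ofAdd (-(1 : ZMod p)) = _
        rw [← ofAdd_add, sub_eq_add_neg]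
      refine ⟨((g.right : (ZMod p)ˣ) : ZMod p) - 1, ?_, by rwa [hval] at hcA⟩
      rw [sub_ne_zero]
      intro h1
      exact hR (Subtype.ext (Units.ext (by simpa using h1)))
  obtain ⟨z, hz0, hzA⟩ := hstep1
  -- Step 2: all of inl is in A
  have hNle : ∀ y : ZMod p, SemidirectProduct.inl (Multiplicative.ofAdd y) ∈ A := by
    intro y
    have keyp : Multiplicative.ofAdd y = (Multiplicative.ofAdd z) ^ ((y * z⁻¹).val) := by
      rw [← ofAdd_nsmul]
      congr 1
      rw [nsmul_eq_mul, ZMod.natCast_val, ZMod.cast_id, mul_assoc, inv_mul_cancel₀ hz0, mul_one]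
    rw [keyp, map_pow]
    exact A.pow_mem hzA _
  have hc : ∀ x : Gq p a, x.right = 1 → x ∈ A := by
    intro x hx
    have hxe : x = SemidirectProduct.inl x.left := by ext <;> simp [hx]
    rw [hxe]
    simpa using hNle (Multiplicative.toAdd x.left)
  constructor
  intro b hb g
  have hcomm : g * b * g⁻¹ * b⁻¹ ∈ A := by
    apply hc
    simp only [SemidirectProduct.mul_right, SemidirectProduct.inv_right]
    rw [mul_comm g.right b.right]
    group
  have : (g * b * g⁻¹ * b⁻¹) * b ∈ B := B.mul_mem (hAB hcomm) hb
  simpa [mul_assoc] using this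
end

section
/- Let p be prime, g a primitive root mod p, b ∈ (ℤ/pℤ)^* and k, ℓ integers. Define P(k,ℓ) = (1/(p(p−1)²))·|∑_{x ∈ (ℤ/pℤ)^*} ω_{p-1}^{k·log_g x} ω_p^{-ℓxb}|². Then P(0,0) = 1/p, P(0,ℓ) = 1/(p(p−1)²) for ℓ ≢ 0 mod p, P(k,0) = 0 for k ≢ 0 mod (p−1), and P(k,ℓ) = 1/(p−1)² for k ≢ 0 mod (p−1) and ℓ ≢ 0 mod p. In particular P(k,ℓ) does not depend on b. -/
/-!
Writing `x = gᵗ`, the sum is the Gauss sum of the multiplicative character `χₖ : g ↦ ω_{p-1}^k`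
against the additive character `ψ : x ↦ ω_p^{-ℓbx}`. Its squared modulus is `(p-1)²` when both
characters are trivial, `0` when only `ψ` is, `1` when only `χₖ` is (a nontrivial additive
character sums to `-1` over the units), and `p` when neither is, since then
`G(χ, ψ) · conj G(χ, ψ) = G(χ, ψ) · G(χ⁻¹, ψ⁻¹) = p`. None of these values involves `b`.
-/

open Finset

section Cyclic

variable {G M : Type*} [Group G] [Fintype G] [AddCommMonoid M] {g : G}

theorem sum_range_orderOf_pow (hg : ∀ x, x ∈ Subgroup.zpowers g) (f : G → M) :
    ∑ t ∈ range (orderOf g), f (g ^ t) = ∑ x, f x := by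
  classical
  rw [← IsCyclic.image_range_orderOf hg, sum_image]
  exact fun s hs t ht h => pow_injOn_Iio_orderOf (by simpa using hs) (by simpa using ht) h

end Cyclic

namespace MulChar

variable {R R' : Type*} [CommMonoid R] [Fintype R] [DecidableEq R] [CommSemiring R']

theorem sum_units_mul (χ : MulChar R R') (f : R → R') :
    ∑ u : Rˣ, χ u * f u = ∑ a, χ a * f a := by
  refine Fintype.sum_of_injective _ Units.val_injective _ _ (fun a ha => ?_) (fun u => rfl)
  rw [χ.map_nonunit (fun ⟨u, hu⟩ => ha ⟨u, hu⟩), zero_mul]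

variable {g : Rˣ} (hg : ∀ x, x ∈ Subgroup.zpowers g)

/-- The character `x ↦ exp (2πi k log_g x / n)` on a monoid whose unit group is cyclic of order
`n` with generator `g`. -/
noncomputable def ofGenerator (k : ZMod (Fintype.card Rˣ)) : MulChar R ℂ :=
  ofRootOfUnity (ζ := Circle.toUnits (ZMod.toCircle k))
    (by
      rw [mem_rootsOfUnity, ← map_pow, ← AddChar.map_nsmul_eq_pow, nsmul_eq_mul,
        ZMod.natCast_self, zero_mul, AddChar.map_zero_eq_one, map_one]) hg

theorem ofGenerator_apply_gen (k : ZMod (Fintype.card Rˣ)) :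
    ofGenerator hg k g = ZMod.stdAddChar k := by
  rw [ofGenerator, ofRootOfUnity_spec]
  rfl

theorem ofGenerator_apply_pow (k : ZMod (Fintype.card Rˣ)) (t : ℕ) :
    ofGenerator hg k ↑(g ^ t) = ZMod.stdAddChar (t • k) := by
  rw [Units.val_pow_eq_pow_val, map_pow, ofGenerator_apply_gen, AddChar.map_nsmul_eq_pow]

theorem ofGenerator_eq_one_iff (k : ZMod (Fintype.card Rˣ)) :
    ofGenerator hg k = 1 ↔ k = 0 := by
  rw [eq_iff hg, ofGenerator_apply_gen, one_apply_coe,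
    ← AddChar.map_zero_eq_one (ZMod.stdAddChar (N := Fintype.card Rˣ)),
    ZMod.injective_stdAddChar.eq_iff]

end MulChar

theorem sq_norm_gaussSum_eq_card {F : Type*} [Field F] [Fintype F] {χ : MulChar F ℂ} (hχ : χ ≠ 1) {ψ : AddChar F ℂ}
    (hψ : ψ.IsPrimitive) : ‖gaussSum χ ψ‖ ^ 2 = Fintype.card F := by
  apply Complex.ofReal_injective
  rw [Complex.ofReal_pow, ← Complex.mul_conj', starRingEnd_apply, star_gaussSum_eq,
    gaussSum_mul_gaussSum_eq_card hχ hψ, Complex.ofReal_natCast]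

section AffineGroup

variable {p : ℕ} [Fact p.Prime] {g : (ZMod p)ˣ} (hg : ∀ x, x ∈ Subgroup.zpowers g)

theorem fourierSamplingSum_eq_gaussSum (b : (ZMod p)ˣ) (k ℓ : ℤ) :
    ∑ t ∈ range (p - 1),
        Complex.exp (2 * Real.pi * Complex.I * (k : ℂ) * (t : ℂ) / ((p : ℂ) - 1)) *
          Complex.exp (-(2 * Real.pi * Complex.I * (ℓ : ℂ) *
            (((((g ^ t * b : (ZMod p)ˣ) : ZMod p)).val : ℕ) : ℂ) / (p : ℂ))) =
      gaussSum (MulChar.ofGenerator hg k) (ZMod.stdAddChar.mulShift (-(ℓ * b))) := by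
  have horder : orderOf g = p - 1 := by
    rw [orderOf_eq_card_of_forall_mem_zpowers hg, Nat.card_eq_fintype_card, ZMod.card_units]
  have hcard : ((Fintype.card (ZMod p)ˣ : ℕ) : ℂ) = p - 1 := by
    rw [ZMod.card_units, Nat.cast_sub (Fact.out : p.Prime).one_le, Nat.cast_one]
  rw [gaussSum, ← MulChar.sum_units_mul, ← sum_range_orderOf_pow hg, horder]
  refine sum_congr rfl fun t _ => ?_
  congr 1
  · have hexponent : t • (k : ZMod (Fintype.card (ZMod p)ˣ)) = ((t * k : ℤ) : ZMod _) := by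
      push_cast
      rw [nsmul_eq_mul]
    rw [MulChar.ofGenerator_apply_pow, hexponent, ZMod.stdAddChar_coe, hcard]
    push_cast
    ring_nf
  · have hphase : -(ℓ * b : ZMod p) * ↑(g ^ t) =
        ((-(ℓ * ((g ^ t * b : (ZMod p)ˣ) : ZMod p).val) : ℤ) : ZMod p) := by
      push_cast
      rw [ZMod.natCast_zmod_val]
      ring
    rw [AddChar.mulShift_apply, hphase, ZMod.stdAddChar_coe]
    push_cast
    ring_nf

theorem sq_norm_gaussSum_ofGenerator (b : (ZMod p)ˣ) (k ℓ : ℤ) :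
    ‖gaussSum (MulChar.ofGenerator hg k) (ZMod.stdAddChar.mulShift (-(ℓ * b)))‖ ^ 2 =
      if (p : ℤ) ∣ ℓ then (if (p : ℤ) - 1 ∣ k then ((p : ℝ) - 1) ^ 2 else 0)
      else (if (p : ℤ) - 1 ∣ k then 1 else (p : ℝ)) := by
  have hp := (Fact.out : p.Prime).one_le
  have hχ : MulChar.ofGenerator hg k = 1 ↔ (p : ℤ) - 1 ∣ k := by
    rw [MulChar.ofGenerator_eq_one_iff, ZMod.intCast_zmod_eq_zero_iff_dvd, ZMod.card_units,
      Nat.cast_sub hp, Nat.cast_one]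
  have hc : -(ℓ * b : ZMod p) = 0 ↔ (p : ℤ) ∣ ℓ := by
    simp [b.ne_zero, ZMod.intCast_zmod_eq_zero_iff_dvd]
  have hψ := ZMod.isPrimitive_stdAddChar p
  split_ifs with hℓ hk hk
  · rw [hc.mpr hℓ, hχ.mpr hk, AddChar.mulShift_zero, gaussSum_one_one, Nat.card_eq_fintype_card,
      ZMod.card_units, Complex.norm_natCast, Nat.cast_sub hp, Nat.cast_one]
  · rw [hc.mpr hℓ, AddChar.mulShift_zero, gaussSum_one_right (hχ.not.mpr hk)]
    simp
  · rw [hχ.mpr hk, gaussSum_one_left (hψ (hc.not.mpr hℓ))]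
    simp
  · rw [sq_norm_gaussSum_eq_card (hχ.not.mpr hk) (.of_ne_one (hψ (hc.not.mpr hℓ))), ZMod.card]

end AffineGroup

/-- Abelian Fourier sampling probabilities for the hidden conjugate `H^b` in the affine
group, treated as `ℤ_{p-1} × ℤ_p`:  with `g` a primitive root mod `p`, `b ∈ (ℤ/pℤ)ˣ`, and
`P(k,ℓ) = (1/(p(p-1)²))·|∑_{t=0}^{p-2} ω_{p-1}^{kt}·ω_p^{-ℓ·gᵗ·b}|²` (i.e. the sum over
`x = gᵗ ∈ (ℤ/pℤ)ˣ` of `ω_{p-1}^{k·log_g x}·ω_p^{-ℓxb}`), one has `P(0,0) = 1/p`,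
`P(0,ℓ) = 1/(p(p-1)²)` for `ℓ ≢ 0 (mod p)`, `P(k,0) = 0` for `k ≢ 0 (mod p-1)`, and
`P(k,ℓ) = 1/(p-1)²` otherwise; in particular `P` does not depend on `b`. -/
theorem stmt_16 (p : ℕ) (hp : Fact p.Prime) (g : (ZMod p)ˣ)
    (hg : ∀ x : (ZMod p)ˣ, x ∈ Subgroup.zpowers g)
    (P : (ZMod p)ˣ → ℤ → ℤ → ℝ)
    (hP : ∀ (b : (ZMod p)ˣ) (k ℓ : ℤ), P b k ℓ =
      1 / ((p : ℝ) * ((p : ℝ) - 1) ^ 2) * ‖(∑ t ∈ Finset.range (p - 1),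
        Complex.exp (2 * Real.pi * Complex.I * (k : ℂ) * (t : ℂ) / ((p : ℂ) - 1)) *
          Complex.exp (-(2 * Real.pi * Complex.I * (ℓ : ℂ) *
            (((((g ^ t * b : (ZMod p)ˣ) : ZMod p)).val : ℕ) : ℂ) / (p : ℂ))))‖ ^ 2) :
    (∀ (b : (ZMod p)ˣ) (k ℓ : ℤ), ((p : ℤ) - 1) ∣ k → (p : ℤ) ∣ ℓ →
        P b k ℓ = 1 / p) ∧
    (∀ (b : (ZMod p)ˣ) (k ℓ : ℤ), ((p : ℤ) - 1) ∣ k → ¬ (p : ℤ) ∣ ℓ →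
        P b k ℓ = 1 / ((p : ℝ) * ((p : ℝ) - 1) ^ 2)) ∧
    (∀ (b : (ZMod p)ˣ) (k ℓ : ℤ), ¬ ((p : ℤ) - 1) ∣ k → (p : ℤ) ∣ ℓ →
        P b k ℓ = 0) ∧
    (∀ (b : (ZMod p)ˣ) (k ℓ : ℤ), ¬ ((p : ℤ) - 1) ∣ k → ¬ (p : ℤ) ∣ ℓ →
        P b k ℓ = 1 / ((p : ℝ) - 1) ^ 2) ∧
    (∀ (b b' : (ZMod p)ˣ) (k ℓ : ℤ), P b k ℓ = P b' k ℓ) := by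
  have hS : ∀ b k ℓ, P b k ℓ = 1 / ((p : ℝ) * ((p : ℝ) - 1) ^ 2) *
      if (p : ℤ) ∣ ℓ then (if (p : ℤ) - 1 ∣ k then ((p : ℝ) - 1) ^ 2 else 0)
      else (if (p : ℤ) - 1 ∣ k then 1 else (p : ℝ)) := fun b k ℓ => by
    rw [hP, fourierSamplingSum_eq_gaussSum hg, sq_norm_gaussSum_ofGenerator]
  have hp2 : (2 : ℝ) ≤ p := by exact_mod_cast hp.out.two_le
  have hp0 : (p : ℝ) ≠ 0 := by linarith
  have hp1 : (p : ℝ) - 1 ≠ 0 := by linarith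
  refine ⟨fun b k ℓ hk hℓ => ?_, fun b k ℓ hk hℓ => ?_, fun b k ℓ hk hℓ => ?_,
    fun b k ℓ hk hℓ => ?_, fun b b' k ℓ => by rw [hS, hS]⟩
  · rw [hS, if_pos hℓ, if_pos hk]
    field_simp
  · rw [hS, if_neg hℓ, if_pos hk, mul_one]
  · rw [hS, if_pos hℓ, if_neg hk, mul_zero]
  · rw [hS, if_neg hℓ, if_neg hk]
    field_simp
end
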